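/- Let G be a graph with ordering σ = (u₁,…,u_n,u_{n+1}) (u_{n+1} isolated), let P₁ = (P₀, u_x) be a normal path of G(i+1,j), and suppose uᵢ ∈ V(G(i,j)) and u_x ∈ N(uᵢ). Then P = (P₁, uᵢ) is a normal path of G(i,j). -/

import Mathlib

def UmbrellaFree {V : Type*} [LinearOrder V] (G : SimpleGraph V) : Prop :=
  ∀ x y z : V, x < y → y < z → G.Adj x z → G.Adj x y ∨ G.Adj y z

def LDFSOrdering {V : Type*} [LinearOrder V] (G : SimpleGraph V) : Prop :=
  ∀ a b c : V, a < b → b < c → G.Adj a c → ¬ G.Adj a b →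
    ∃ d : V, a < d ∧ d < b ∧ G.Adj d b ∧ ¬ G.Adj d c

/-- A (simple) path of `G`, as a list of distinct vertices with consecutive vertices
adjacent. -/
def IsPathList {V : Type*} (G : SimpleGraph V) (P : List V) : Prop :=
  P.Nodup ∧ P.Chain' G.Adj

/-- `P = (v₁, v₂, …)` is typical (w.r.t. the ordering σ given by the linear order on `V`):
`v₁` is the rightmost vertex of `V(P)` in σ, and `v₂` is the rightmost vertex of
`N(v₁) ∩ V(P)` in σ. -/
def TypicalPath {V : Type*} [LinearOrder V] (G : SimpleGraph V) : List V → Prop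
  | [] => True
  | [_] => True
  | v1 :: v2 :: rest =>
      (∀ v ∈ v1 :: v2 :: rest, v ≤ v1) ∧ (∀ v ∈ v2 :: rest, G.Adj v1 v → v ≤ v2)

/-- The "normality from each vertex on" condition: for any two consecutive vertices
`v_{i-1}, v_i` of the list, `v_i` is the rightmost vertex of
`N(v_{i-1}) ∩ {v_i, …, v_k}` in σ. -/
def NormalFrom {V : Type*} [LinearOrder V] (G : SimpleGraph V) : List V → Prop
  | [] => True
  | [_] => True
  | a :: b :: rest =>
      (∀ v ∈ b :: rest, G.Adj a v → v ≤ b) ∧ NormalFrom G (b :: rest)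

/-- `P` is a normal path of `G` (w.r.t. σ): a typical path such that each `v_i` is the
rightmost vertex of `N(v_{i-1}) ∩ {v_i, …, v_k}` in σ. -/
def NormalPath {V : Type*} [LinearOrder V] (G : SimpleGraph V) (P : List V) : Prop :=
  IsPathList G P ∧ (∀ h : P ≠ [], ∀ v ∈ P, v ≤ P.head h) ∧ NormalFrom G P

/-- The vertex set of `G(i,j)` (`0`-indexed), where `u_n` is the dummy isolated vertex. -/
def Gset {n : ℕ} (G : SimpleGraph (Fin (n + 1))) (i j : ℕ) : Set (Fin (n + 1)) :=
  {v | i ≤ (v : ℕ) ∧ (v : ℕ) ≤ j ∧ ∀ w : Fin (n + 1), (w : ℕ) = j + 1 → ¬ G.Adj v w}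

/-- `P` is a normal path of the induced subgraph on the vertex set `S` (adjacency among
vertices of `P` in the induced subgraph coincides with adjacency in `G`). -/
def NormalPathIn {V : Type*} [LinearOrder V] (G : SimpleGraph V) (S : Set V)
    (P : List V) : Prop :=
  (∀ v ∈ P, v ∈ S) ∧ NormalPath G P

/-! Every vertex of `G(i+1,j)` lies to the right of `uᵢ` in σ, so appending `uᵢ` at the end
of a path can violate none of the "rightmost vertex" conditions of normality; it is new to the
path and adjacent to its last vertex, so the result is still a path. -/

theorem IsPathList.concat {V : Type*} {G : SimpleGraph V} {P : List V} {u : V}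
    (hP : IsPathList G P) (hu : u ∉ P) (hadj : ∀ x ∈ P.getLast?, G.Adj x u) :
    IsPathList G (P ++ [u]) :=
  ⟨List.nodup_append.2 ⟨hP.1, List.nodup_singleton u,
      fun _ hv _ hw => by rw [List.mem_singleton.1 hw]; exact ne_of_mem_of_not_mem hv hu⟩,
    List.isChain_append.2 ⟨hP.2, List.isChain_singleton u,
      fun x hx y hy => by cases hy; exact hadj x hx⟩⟩

section LinearOrder

variable {V : Type*} [LinearOrder V] {G : SimpleGraph V} {u : V}

theorem NormalFrom.concat : ∀ {P : List V}, NormalFrom G P →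
    (∀ v ∈ P, u ≤ v) → NormalFrom G (P ++ [u])
  | [], _, _ => trivial
  | [_], _, _ => ⟨fun v hv _ => by simp_all, trivial⟩
  | _ :: b :: r, ⟨hnext, hrest⟩, hle => by
    refine ⟨fun v hv hav => ?_, NormalFrom.concat hrest fun v hv => hle v (by simp_all)⟩
    rcases List.mem_append.1 (show v ∈ b :: r ++ [u] from hv) with hv | hv
    · exact hnext v hv hav
    · rw [List.mem_singleton.1 hv]; exact hle b (by simp)

theorem NormalPath.concat {P : List V} (hP : NormalPath G P) (hu : ∀ v ∈ P, u < v)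
    (hadj : ∀ x ∈ P.getLast?, G.Adj x u) : NormalPath G (P ++ [u]) := by
  obtain ⟨hpath, hhead, hnormal⟩ := hP
  refine ⟨hpath.concat (fun hmem => lt_irrefl u (hu u hmem)) hadj, fun hne v hv => ?_,
    hnormal.concat fun v hv => (hu v hv).le⟩
  rcases eq_or_ne P [] with rfl | hP
  · simp_all
  rw [List.head_append_of_ne_nil hP]
  rcases List.mem_append.1 hv with hv | hv
  · exact hhead hP v hv
  · rw [List.mem_singleton.1 hv]; exact (hu _ (List.head_mem hP)).le

end LinearOrder

theorem Gset_succ_subset {n : ℕ} (G : SimpleGraph (Fin (n + 1))) (i j : ℕ) :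
    Gset G (i + 1) j ⊆ Gset G i j :=
  fun _ ⟨hi, hj, hnadj⟩ => ⟨by omega, hj, hnadj⟩

theorem lt_of_mem_Gset_succ {n : ℕ} {G : SimpleGraph (Fin (n + 1))} {i j : ℕ}
    {v : Fin (n + 1)} (hv : v ∈ Gset G (i + 1) j) (hi : i < n + 1) : ⟨i, hi⟩ < v :=
  Fin.lt_def.2 (Nat.lt_of_succ_le hv.1)

/-- If `P₁ = (P₀, u_x)` is a normal path of `G(i+1,j)`, `uᵢ ∈ V(G(i,j))` and
`u_x ∈ N(uᵢ)`, then `P = (P₁, uᵢ)` is a normal path of `G(i,j)`. -/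
theorem normal_path_extend {n : ℕ} (G : SimpleGraph (Fin (n + 1)))
    (i j : ℕ) (hi : i < n)
    (P₀ : List (Fin (n + 1))) (ux : Fin (n + 1))
    (hP₁ : NormalPathIn G (Gset G (i + 1) j) (P₀ ++ [ux]))
    (hui : (⟨i, by omega⟩ : Fin (n + 1)) ∈ Gset G i j)
    (hadj : G.Adj (⟨i, by omega⟩ : Fin (n + 1)) ux) :
    NormalPathIn G (Gset G i j) ((P₀ ++ [ux]) ++ [(⟨i, by omega⟩ : Fin (n + 1))]) := by
  obtain ⟨hmem, hnormal⟩ := hP₁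
  refine ⟨fun v hv => ?_, hnormal.concat (fun v hv => lt_of_mem_Gset_succ (hmem v hv) _)
    (by simpa using hadj.symm)⟩
  rcases List.mem_append.1 hv with hv | hv
  · exact Gset_succ_subset G i j (hmem v hv)
  · rwa [List.mem_singleton.1 hv]
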